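/- (Thermalization under the energy eigenstate thermalization hypothesis.) Let E be a finite-dimensional complex inner product space, H a self-adjoint operator on E, and (ψ_j)_{j∈J} an orthonormal family of eigenvectors of H with pairwise distinct eigenvalues E_j, J finite. Let P be a positive semidefinite self-adjoint operator, let V > 0 and κ > 0, and assume ⟨ψ_j, P ψ_j⟩ ≤ exp(−κV) for every j ∈ J. Then for every unit vector φ₀ in the span of (ψ_j)_{j∈J}, with φ(t) := exp(−itH)φ₀, the long-time average converges and satisfies lim_{τ→∞} (1/τ)∫₀^τ ⟨φ(t), P φ(t)⟩ dt ≤ exp(−κV). -/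

import Mathlib

open MeasureTheory Filter Topology

/-! Writing `φ₀ = ∑ c_j ψ_j`, the evolution only attaches the phases `e^{-iE_j t}` to the
coefficients, so `⟪φ(t), P φ(t)⟫ = ∑_{j,k} c̄_j c_k ⟪ψ_j, P ψ_k⟫ e^{i(E_j - E_k)t}`. The time
average of `e^{iωt}` tends to `1` if `ω = 0` and to `0` otherwise, and since the spectrum is
non-degenerate only the diagonal terms survive: the limit is `∑ |c_j|² ⟪ψ_j, P ψ_j⟫`, a convex
combination of the eigenstate expectations, hence at most `exp(−κV)`. -/

theorem NormedSpace.exp_apply_of_apply_eq_smul {𝕂 E : Type*} [RCLike 𝕂] [NormedAddCommGroup E]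
    [NormedSpace 𝕂 E] [CompleteSpace E] {A : E →L[𝕂] E} {x : E} {μ : 𝕂} (h : A x = μ • x) :
    NormedSpace.exp A x = NormedSpace.exp μ • x := by
  have hpow : ∀ n : ℕ, (A ^ n) x = μ ^ n • x := by
    intro n
    induction n with
    | zero => simp
    | succ n ih => rw [pow_succ, mul_apply_eq_comp, h, map_smul, ih, smul_smul, pow_succ']
  have hA := (NormedSpace.exp_series_hasSum_exp' (𝕂 := 𝕂) A).mapL (ContinuousLinearMap.apply 𝕂 E x)
  refine hA.unique ?_
  simpa [hpow, smul_smul] using (NormedSpace.exp_series_hasSum_exp' (𝕂 := 𝕂) μ).smul_const x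

section TimeAverage

variable {F : Type*} [NormedAddCommGroup F] [NormedSpace ℝ F]

noncomputable def timeAverage (f : ℝ → F) (τ : ℝ) : F := (1 / τ) • ∫ t in (0 : ℝ)..τ, f t

theorem timeAverage_finsetSum {ι : Type*} (s : Finset ι) {f : ι → ℝ → F}
    (hf : ∀ i ∈ s, Continuous (f i)) (τ : ℝ) :
    timeAverage (fun t => ∑ i ∈ s, f i t) τ = ∑ i ∈ s, timeAverage (f i) τ := by
  rw [timeAverage, intervalIntegral.integral_finsetSum fun i hi => (hf i hi).intervalIntegrable _ _,
    Finset.smul_sum]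
  rfl

theorem timeAverage_const_mul (a : ℂ) (f : ℝ → ℂ) (τ : ℝ) :
    timeAverage (fun t => a * f t) τ = a * timeAverage f τ := by
  rw [timeAverage, timeAverage, intervalIntegral.integral_const_mul, mul_smul_comm]

theorem timeAverage_re {f : ℝ → ℂ} (hf : Continuous f) (τ : ℝ) :
    timeAverage (fun t => (f t).re) τ = (timeAverage f τ).re := by
  rw [timeAverage, timeAverage, Complex.smul_re, smul_eq_mul]
  congr 1
  exact intervalIntegral.intervalIntegral_re (hf.intervalIntegrable _ _)

theorem tendsto_timeAverage_re {f : ℝ → ℂ} (hf : Continuous f) {z : ℂ}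
    (h : Tendsto (timeAverage f) atTop (𝓝 z)) :
    Tendsto (timeAverage fun t => (f t).re) atTop (𝓝 z.re) :=
  ((Complex.continuous_re.tendsto z).comp h).congr fun τ => (timeAverage_re hf τ).symm

theorem tendsto_timeAverage_const [CompleteSpace F] (c : F) :
    Tendsto (timeAverage fun _ => c) atTop (𝓝 c) := by
  refine tendsto_const_nhds.congr' ?_
  filter_upwards [eventually_ne_atTop 0] with τ hτ
  simp [timeAverage, intervalIntegral.integral_const, smul_smul, hτ]

theorem tendsto_timeAverage_exp_mul_I (ω : ℝ) :
    Tendsto (timeAverage fun t => Complex.exp (ω * Complex.I * t)) atTop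
      (𝓝 (if ω = 0 then 1 else 0)) := by
  split_ifs with hω
  · simpa [hω] using tendsto_timeAverage_const (1 : ℂ)
  have hc : (ω : ℂ) * Complex.I ≠ 0 := by simp [hω]
  have hnorm : ∀ t : ℝ, ‖Complex.exp (ω * Complex.I * t)‖ = 1 := fun t => by
    simpa [mul_right_comm] using Complex.norm_exp_ofReal_mul_I (ω * t)
  have hbdd : ∀ τ : ℝ, ‖∫ t in (0 : ℝ)..τ, Complex.exp (ω * Complex.I * t)‖ ≤ 2 / |ω| := by
    intro τ
    rw [integral_exp_mul_complex hc, norm_div]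
    gcongr
    · calc _ ≤ ‖Complex.exp (ω * Complex.I * τ)‖ + ‖Complex.exp (ω * Complex.I * (0 : ℝ))‖ :=
            norm_sub_le _ _
        _ = 2 := by rw [hnorm, hnorm]; norm_num
    · simp
  have hinv : Tendsto (fun τ : ℝ => 1 / τ) atTop (𝓝 0) := by simpa using tendsto_inv_atTop_zero
  exact hinv.zero_smul_isBoundedUnder_le (isBoundedUnder_of ⟨2 / |ω|, hbdd⟩)

theorem tendsto_timeAverage_sum_exp {ι : Type*} (s : Finset ι) (a : ι → ℂ) (ω : ι → ℝ) :
    Tendsto (timeAverage fun t => ∑ i ∈ s, a i * Complex.exp (ω i * Complex.I * t)) atTop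
      (𝓝 (∑ i ∈ s, if ω i = 0 then a i else 0)) := by
  have hcont : ∀ i ∈ s, Continuous fun t : ℝ => a i * Complex.exp (ω i * Complex.I * t) :=
    fun i _ => by fun_prop
  have hlim := tendsto_finsetSum s fun i _ => (tendsto_timeAverage_exp_mul_I (ω i)).const_mul (a i)
  simp only [mul_ite, mul_one, mul_zero] at hlim
  refine hlim.congr fun τ => ?_
  rw [timeAverage_finsetSum s hcont]
  exact Finset.sum_congr rfl fun i _ => (timeAverage_const_mul _ _ _).symm

end TimeAverage

theorem inner_sum_smul_apply_sum_smul {𝕜 E ι : Type*} [RCLike 𝕜] [NormedAddCommGroup E]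
    [InnerProductSpace 𝕜 E] (P : E →L[𝕜] E) (s : Finset ι) (v : ι → E) (b : ι → 𝕜) :
    inner 𝕜 (∑ i ∈ s, b i • v i) (P (∑ j ∈ s, b j • v j))
      = ∑ i ∈ s, ∑ j ∈ s, starRingEnd 𝕜 (b i) * b j * inner 𝕜 (v i) (P (v j)) := by
  rw [map_sum, sum_inner]
  refine Finset.sum_congr rfl fun i _ => ?_
  rw [inner_sum]
  refine Finset.sum_congr rfl fun j _ => ?_
  rw [map_smul, inner_smul_left, inner_smul_right, mul_assoc]

theorem re_sum_norm_sq_mul_le {ι : Type*} {s : Finset ι} {c z : ι → ℂ} {B : ℝ}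
    (hc : ∑ i ∈ s, ‖c i‖ ^ 2 = 1) (hz : ∀ i ∈ s, (z i).re ≤ B) :
    (∑ i ∈ s, (‖c i‖ ^ 2 : ℂ) * z i).re ≤ B :=
  calc (∑ i ∈ s, (‖c i‖ ^ 2 : ℂ) * z i).re = ∑ i ∈ s, ‖c i‖ ^ 2 * (z i).re := by
        simp_rw [Complex.re_sum, ← Complex.ofReal_pow, Complex.re_ofReal_mul]
    _ ≤ ∑ i ∈ s, ‖c i‖ ^ 2 * B :=
        Finset.sum_le_sum fun i hi => mul_le_mul_of_nonneg_left (hz i hi) (sq_nonneg _)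
    _ = B := by rw [← Finset.sum_mul, hc, one_mul]

section Schrodinger

variable {E J : Type*} [NormedAddCommGroup E] [InnerProductSpace ℂ E]

theorem exp_smul_apply_sum_eigenvectors [CompleteSpace E] {H : E →L[ℂ] E} {ψ : J → E}
    {Ej : J → ℝ} (heig : ∀ j, H (ψ j) = (Ej j : ℂ) • ψ j) (s : Finset J) (c : J → ℂ) (t : ℝ) :
    NormedSpace.exp ((-Complex.I * t) • H) (∑ j ∈ s, c j • ψ j)
      = ∑ j ∈ s, (Complex.exp (-(Ej j * Complex.I * t)) * c j) • ψ j := by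
  rw [map_sum]
  refine Finset.sum_congr rfl fun j _ => ?_
  have hj : ((-Complex.I * t) • H) (ψ j) = (-(Ej j * Complex.I * t)) • ψ j := by
    rw [smul_apply, heig, smul_smul]
    ring_nf
  rw [map_smul, NormedSpace.exp_apply_of_apply_eq_smul hj, ← Complex.exp_eq_exp_ℂ, smul_smul,
    mul_comm]

theorem tendsto_timeAverage_inner_sum_exp [Fintype J] (P : E →L[ℂ] E) (ψ : J → E) {Ej : J → ℝ}
    (hEj : Function.Injective Ej) (c : J → ℂ) :
    Tendsto (timeAverage fun t =>
        inner ℂ (∑ j, (Complex.exp (-(Ej j * Complex.I * t)) * c j) • ψ j)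
          (P (∑ j, (Complex.exp (-(Ej j * Complex.I * t)) * c j) • ψ j)))
      atTop (𝓝 (∑ j, (‖c j‖ ^ 2 : ℂ) * inner ℂ (ψ j) (P (ψ j)))) := by
  classical
  have hphase : ∀ (t : ℝ) (j k : J),
      starRingEnd ℂ (Complex.exp (-(Ej j * Complex.I * t)) * c j)
          * (Complex.exp (-(Ej k * Complex.I * t)) * c k) * inner ℂ (ψ j) (P (ψ k))
        = starRingEnd ℂ (c j) * c k * inner ℂ (ψ j) (P (ψ k))
          * Complex.exp ((Ej j - Ej k : ℝ) * Complex.I * t) := by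
    intro t j k
    rw [map_mul, ← Complex.exp_conj, map_neg, map_mul, map_mul, Complex.conj_ofReal,
      Complex.conj_ofReal, Complex.conj_I, Complex.ofReal_sub,
      show (Ej j - Ej k : ℂ) * Complex.I * t
        = -(Ej j * -Complex.I * t) + -(Ej k * Complex.I * t) by ring, Complex.exp_add]
    ring
  simp_rw [inner_sum_smul_apply_sum_smul, hphase, ← Fintype.sum_prod_type']
  convert tendsto_timeAverage_sum_exp _ _ _ using 2
  rw [Fintype.sum_prod_type]
  simp only [sub_eq_zero, hEj.eq_iff, Finset.sum_ite_eq, Finset.mem_univ, if_true,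
    Complex.conj_mul']

end Schrodinger

theorem thermalization_from_ETH_general
    {E : Type*} [NormedAddCommGroup E] [InnerProductSpace ℂ E] [FiniteDimensional ℂ E]
    (H : E →L[ℂ] E)
    {J : Type*} [Fintype J]
    (ψ : J → E) (hψ : Orthonormal ℂ ψ)
    (Ej : J → ℝ) (hEj : Function.Injective Ej)
    (heig : ∀ j, H (ψ j) = (Ej j : ℂ) • ψ j)
    (P : E →L[ℂ] E)
    (V κ : ℝ)
    (hETH : ∀ j, (inner ℂ (ψ j) (P (ψ j)) : ℂ).re ≤ Real.exp (-κ * V))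
    (φ0 : E) (hmem : φ0 ∈ Submodule.span ℂ (Set.range ψ)) (hφ0 : ‖φ0‖ = 1)
    (φ : ℝ → E) (hφ : ∀ t : ℝ, φ t = NormedSpace.exp (((-Complex.I) * (t : ℂ)) • H) φ0) :
    ∃ ℓ : ℝ,
      Tendsto (fun τ : ℝ => (1 / τ) * ∫ t in (0:ℝ)..τ, (inner ℂ (φ t) (P (φ t)) : ℂ).re)
        atTop (nhds ℓ) ∧ ℓ ≤ Real.exp (-κ * V) := by
  obtain ⟨c, rfl⟩ := (Submodule.mem_span_range_iff_exists_fun ℂ).mp hmem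
  obtain rfl : φ = fun t : ℝ => ∑ j, (Complex.exp (-(Ej j * Complex.I * t)) * c j) • ψ j :=
    funext fun t => by rw [hφ, exp_smul_apply_sum_eigenvectors heig]
  have hc : ∑ j, ‖c j‖ ^ 2 = 1 := by
    simpa [hφ0] using (hψ.orthogonalFamily.norm_sum c Finset.univ).symm
  exact ⟨_, tendsto_timeAverage_re (by fun_prop) (tendsto_timeAverage_inner_sum_exp P ψ hEj c),
    re_sum_norm_sq_mul_le hc fun j _ => hETH j⟩

/-- **Thermalization under the energy eigenstate thermalization hypothesis.**  If every
eigenstate `ψ_j` (orthonormal, with pairwise distinct eigenvalues) of the self-adjoint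
Hamiltonian `H` satisfies `⟪ψ_j, P ψ_j⟫ ≤ exp(−κV)` for a positive semidefinite self-adjoint
`P`, then for every unit vector `φ₀` in the span of the `ψ_j`, the long-time average of
`⟪φ(t), P φ(t)⟫` along `φ(t) = exp(−itH)φ₀` converges and its limit is at most `exp(−κV)`. -/
theorem thermalization_from_ETH
    {E : Type*} [NormedAddCommGroup E] [InnerProductSpace ℂ E] [FiniteDimensional ℂ E]
    (H : E →L[ℂ] E) (hH : IsSelfAdjoint H)
    {J : Type*} [Fintype J]
    (ψ : J → E) (hψ : Orthonormal ℂ ψ)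
    (Ej : J → ℝ) (hEj : Function.Injective Ej)
    (heig : ∀ j, H (ψ j) = (Ej j : ℂ) • ψ j)
    (P : E →L[ℂ] E) (hP : IsSelfAdjoint P)
    (hpos : ∀ x : E, 0 ≤ (inner ℂ x (P x) : ℂ).re)
    (V κ : ℝ) (hV : 0 < V) (hκ : 0 < κ)
    (hETH : ∀ j, (inner ℂ (ψ j) (P (ψ j)) : ℂ).re ≤ Real.exp (-κ * V))
    (φ0 : E) (hmem : φ0 ∈ Submodule.span ℂ (Set.range ψ)) (hφ0 : ‖φ0‖ = 1)
    (φ : ℝ → E) (hφ : ∀ t : ℝ, φ t = NormedSpace.exp (((-Complex.I) * (t : ℂ)) • H) φ0) :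
    ∃ ℓ : ℝ,
      Tendsto (fun τ : ℝ => (1 / τ) * ∫ t in (0:ℝ)..τ, (inner ℂ (φ t) (P (φ t)) : ℂ).re)
        atTop (nhds ℓ) ∧ ℓ ≤ Real.exp (-κ * V) :=
  thermalization_from_ETH_general H ψ hψ Ej hEj heig P V κ hETH φ0 hmem hφ0 φ hφ
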